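/- Let g, h ∈ 𝒢'. Then: (i) h ∈ ε(g) if and only if ε(h) ⊆ ε(g); (ii) if h ∈ ε(g) and h ≠ g, then there exists an uphill g₀a₁g₁⋯aₙgₙ in 𝒢⁺ with n = ↑(g) − ↑(h), g₀ = h, gₙ = g, and gᵢ ∈ ε(g) for all 0 ≤ i ≤ n. -/
import Mathlib


set_option autoImplicit false

universe u v

namespace Paper

/-- Anchors: `A = X ∪ X' ∪ {1}`. -/
inductive Anchor (X : Type u) : Type u where
  | one : Anchor X
  | pos : X → Anchor X
  | neg : X → Anchor X

namespace Anchor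

/-- The involution `'` on anchors. -/
def inv {X : Type u} : Anchor X → Anchor X
  | .one => .one
  | .pos x => .neg x
  | .neg x => .pos x

end Anchor

/-- Formal expressions for the `5`-tuples: `one` is `1`, `base x` is `g_{xx'}`, and
`node l a c b r` is the tuple `(l, a, c, b, r)`. -/
inductive G5 (X : Type u) : Type u where
  | one : G5 X
  | base : X → G5 X
  | node : G5 X → Anchor X → G5 X → Anchor X → G5 X → G5 X

namespace G5

variable {X : Type u}

/-- left entry `g^l` -/
def lt : G5 X → G5 X
  | .node l _ _ _ _ => l
  | _ => .one

/-- right entry `g^r` -/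
def rt : G5 X → G5 X
  | .node _ _ _ _ r => r
  | _ => .one

/-- middle entry `g^c` -/
def ct : G5 X → G5 X
  | .node _ _ c _ _ => c
  | _ => .one

/-- left anchor `g^{la}` -/
def la : G5 X → Anchor X
  | .node _ a _ _ _ => a
  | _ => .one

/-- right anchor `g^{ra}` -/
def ra : G5 X → Anchor X
  | .node _ _ _ b _ => b
  | .base x => .neg x
  | .one => .one

/-- the height `↑(g)` -/
def ht : G5 X → ℕ
  | .one => 0
  | .base _ => 1
  | .node l _ _ _ _ => ht l + 1

/-- membership in `𝒢_{i,e}` -/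
inductive MemE : G5 X → ℕ → Prop where
  | base (x : X) : MemE (.base x) 1
  | stepL {g : G5 X} {i : ℕ} (h : MemE g i) :
      MemE (.node g g.la.inv g.lt g.ra.inv g) (i + 1)
  | stepR {g : G5 X} {i : ℕ} (h : MemE g i) :
      MemE (.node g g.ra.inv g.lt g.la.inv g) (i + 1)

mutual
  /-- membership in `𝒢_{i,d}` -/
  inductive MemD : G5 X → ℕ → Prop where
    | mk {l c r : G5 X} {a b : Anchor X} {i : ℕ}
        (hl : Mem l (i + 1)) (hc : Mem c i) (hr : Mem r (i + 1)) (hne : l ≠ r)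
        (hla : (c = l.lt ∧ a = l.la.inv) ∨ (c = l.rt ∧ a = l.ra.inv))
        (hrb : (c = r.lt ∧ b = r.la.inv) ∨ (c = r.rt ∧ b = r.ra.inv)) :
        MemD (.node l a c b r) (i + 2)

  /-- membership in `𝒢_i` (with `𝒢_0 = {1}` and `𝒢_i = 𝒢_{i,e} ∪ 𝒢_{i,d}` for `i ≥ 1`) -/
  inductive Mem : G5 X → ℕ → Prop where
    | one : Mem .one 0
    | ofE {g : G5 X} {i : ℕ} (h : MemE g i) : Mem g i
    | ofD {g : G5 X} {i : ℕ} (h : MemD g i) : Mem g i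
end

/-- `g ∈ 𝒢' = 𝒢^5 ∪ {1}` -/
def InG' (g : G5 X) : Prop := ∃ i, Mem g i

/-- `g ∈ 𝒢^5 = ⋃_{i ≥ 1} 𝒢_i` -/
def IsTup (g : G5 X) : Prop := ∃ i, 1 ≤ i ∧ Mem g i

end G5

/-- The alphabet `𝒢 = 𝒢^5 ∪ A` (the symbol `1` is the anchor `1`). -/
def Letter (X : Type u) : Type u := Anchor X ⊕ {g : G5 X // g.IsTup}

/-- `𝒢⁺`, the free semigroup on `𝒢`. -/
abbrev W (X : Type u) := FreeSemigroup (Letter X)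

/-- the one-letter word given by an anchor -/
def wA {X : Type u} (a : Anchor X) : W X := FreeSemigroup.of (Sum.inl a)

open Classical in
/-- the one-letter word given by an element of `𝒢'` (the element `1` of `𝒢'` is the
same letter as the anchor `1`) -/
noncomputable def wG {X : Type u} (g : G5 X) : W X :=
  if h : g.IsTup then FreeSemigroup.of (Sum.inr ⟨g, h⟩) else wA Anchor.one

/-- the three-letter word `g^L = (g^{la})' g^l g^{la}` -/
noncomputable def wL {X : Type u} (g : G5 X) : W X := wA g.la.inv * wG g.lt * wA g.la

/-- the three-letter word `g^R = (g^{ra})' g^r g^{ra}` -/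
noncomputable def wR {X : Type u} (g : G5 X) : W X := wA g.ra.inv * wG g.rt * wA g.ra

/-- The generating pairs of the congruence `ρ`. -/
inductive Rel {X : Type u} : W X → W X → Prop where
  | xinvx (x : X) : Rel (wA (.pos x) * wA (.neg x) * wA (.pos x)) (wA (.pos x))
  | invxinv (x : X) : Rel (wA (.neg x) * wA (.pos x) * wA (.neg x)) (wA (.neg x))
  | gbase (x : X) : Rel (wG (.base x)) (wA (.pos x) * wA (.neg x))
  | one_mul {g : G5 X} (h : g.InG') : Rel (wA .one * wG g) (wG g)
  | mul_one {g : G5 X} (h : g.InG') : Rel (wG g * wA .one) (wG g)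
  | idem {g : G5 X} (h : g.InG') : Rel (wG g * wG g) (wG g)
  | cLg {g : G5 X} {i : ℕ} (h : G5.Mem g i) (h2 : 2 ≤ i) :
      Rel (wG g.ct * wL g * wG g) (wG g)
  | gRc {g : G5 X} {i : ℕ} (h : G5.Mem g i) (h2 : 2 ≤ i) :
      Rel (wG g * wR g * wG g.ct) (wG g)
  | RgL {g : G5 X} {i : ℕ} (h : G5.Mem g i) (h2 : 2 ≤ i) :
      Rel (wR g * wG g * wL g) (wR g * wG g.ct * wL g)

/-- The congruence `ρ` generated by `Rel`. -/
def rho (X : Type u) : Con (W X) := conGen Rel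

/-- `F°(X) = 𝒢⁺/ρ`. -/
abbrev Fo (X : Type u) := (rho X).Quotient

/-- `[u]`, the `ρ`-class of a word `u ∈ 𝒢⁺`. -/
def cl {X : Type u} (u : W X) : Fo X := u

/-- left anchored triplet -/
def LeftAnch {X : Type u} (g1 : G5 X) (a : Anchor X) (g2 : G5 X) : Prop :=
  (g1 = g2.lt ∧ a = g2.la) ∨ (g1 = g2.rt ∧ a = g2.ra)

/-- right anchored triplet -/
def RightAnch {X : Type u} (g1 : G5 X) (a : Anchor X) (g2 : G5 X) : Prop :=
  (g2 = g1.lt ∧ a = g1.la.inv) ∨ (g2 = g1.rt ∧ a = g1.ra.inv)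

/-- anchored triplet -/
def Anch {X : Type u} (g1 : G5 X) (a : Anchor X) (g2 : G5 X) : Prop :=
  LeftAnch g1 a g2 ∨ RightAnch g1 a g2

/-- A (potential) landscape `g₀a₁g₁⋯aₙgₙ`, recorded as its first letter `g₀` together
with the list of pairs `(a₁,g₁), …, (aₙ,gₙ)`. -/
structure Landscape (X : Type u) : Type u where
  head : G5 X
  tail : List (Anchor X × G5 X)

/-- last letter of `g :: (map snd l)` -/
def endAt {X : Type u} (g : G5 X) (l : List (Anchor X × G5 X)) : G5 X :=
  (l.map Prod.snd).getLastD g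

/-- every consecutive triplet is anchored -/
def ChainAnch {X : Type u} : G5 X → List (Anchor X × G5 X) → Prop
  | _, [] => True
  | g, (a, h) :: rest => Anch g a h ∧ ChainAnch h rest

/-- heights increase by one at each step -/
def ChainUp {X : Type u} : G5 X → List (Anchor X × G5 X) → Prop
  | _, [] => True
  | g, (_, h) :: rest => G5.ht h = G5.ht g + 1 ∧ ChainUp h rest

/-- heights decrease by one at each step -/
def ChainDown {X : Type u} : G5 X → List (Anchor X × G5 X) → Prop
  | _, [] => True
  | g, (_, h) :: rest => G5.ht h + 1 = G5.ht g ∧ ChainDown h rest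

/-- the maximal ascending prefix -/
def upPre {X : Type u} : G5 X → List (Anchor X × G5 X) → List (Anchor X × G5 X)
  | _, [] => []
  | g, (a, h) :: rest => if G5.ht h = G5.ht g + 1 then (a, h) :: upPre h rest else []

namespace Landscape

variable {X : Type u}

/-- the letters subsequence `g₀g₁⋯gₙ` -/
def letters (L : Landscape X) : List (G5 X) := L.head :: L.tail.map Prod.snd

/-- the anchors subsequence `a₁⋯aₙ` -/
def anchors (L : Landscape X) : List (Anchor X) := L.tail.map Prod.fst

/-- the word `g₀a₁g₁⋯aₙgₙ ∈ 𝒢⁺` -/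
noncomputable def word (L : Landscape X) : W X :=
  L.tail.foldl (fun w p => w * wA p.1 * wG p.2) (wG L.head)

/-- the last letter `gₙ` -/
def last (L : Landscape X) : G5 X := endAt L.head L.tail

/-- `L` is a landscape: all letters in `𝒢'` and all triplets anchored -/
def IsLandscape (L : Landscape X) : Prop :=
  (∀ g ∈ L.letters, g.InG') ∧ ChainAnch L.head L.tail

/-- `L` is an uphill -/
def IsUphill (L : Landscape X) : Prop := L.IsLandscape ∧ ChainUp L.head L.tail

/-- `L` is a downhill -/
def IsDownhill (L : Landscape X) : Prop := L.IsLandscape ∧ ChainDown L.head L.tail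

/-- `L` is an uphill followed by a downhill -/
def IsUpDown (L : Landscape X) : Prop :=
  L.IsLandscape ∧ ∃ utl dtl, L.tail = utl ++ dtl ∧
    ChainUp L.head utl ∧ ChainDown (endAt L.head utl) dtl

/-- `L` is a mountain -/
def IsMountain (L : Landscape X) : Prop :=
  L.IsLandscape ∧ L.head = G5.one ∧
    (L.tail = [] ∨
      ∃ utl dtl, L.tail = utl ++ dtl ∧ utl ≠ [] ∧ dtl ≠ [] ∧
        ChainUp L.head utl ∧ ChainDown (endAt L.head utl) dtl ∧ L.last = G5.one)

/-- `λ_l(L)`, the maximal uphill prefix -/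
def lamL (L : Landscape X) : Landscape X := ⟨L.head, upPre L.head L.tail⟩

/-- landscape from a list of letters and a list of anchors -/
def mk' (gs : List (G5 X)) (as : List (Anchor X)) : Landscape X :=
  ⟨gs.headD G5.one, as.zip gs.tail⟩

/-- the reverse landscape `L⃖ = gₙaₙ'g_{n-1}⋯a₁'g₀` -/
def rev (L : Landscape X) : Landscape X :=
  mk' L.letters.reverse (L.anchors.reverse.map Anchor.inv)

/-- `λ_r(L)`, the maximal downhill suffix -/
def lamR (L : Landscape X) : Landscape X := L.rev.lamL.rev

/-- the peak `κ(L)` of a mountain -/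
def peak (L : Landscape X) : G5 X := L.lamL.last

/-- the word of `L` with its first letter removed -/
noncomputable def tailWord (L : Landscape X) : W X :=
  match L.tail with
  | [] => wA Anchor.one
  | (a, h) :: rest => rest.foldl (fun w p => w * wA p.1 * wG p.2) (wA a * wG h)

/-- `L * M` : the concatenation of the two words without repeating the common letter
`L.last = M.head` at the junction -/
noncomputable def star (L M : Landscape X) : W X :=
  match M.tail with
  | [] => L.word
  | _ :: _ => L.word * M.tailWord

end Landscape

/-- the ground `ε(g)` of `g ∈ 𝒢'` -/
def ground {X : Type u} : G5 X → Set (G5 X)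
  | .one => {G5.one}
  | .base x => {G5.one, G5.base x}
  | .node l a c b r => ground l ∪ {G5.node l a c b r} ∪ ground r

/-- the ground `ε(L)` of a landscape -/
def Landscape.grd {X : Type u} (L : Landscape X) : Set (G5 X) :=
  {h | ∃ g ∈ L.letters, h ∈ ground g}

section Green

variable {X : Type u}

/-- `s ≤_R t`, i.e. `sM ⊆ tM` -/
def leR (s t : Fo X) : Prop := ∀ z : Fo X, (∃ m, z = s * m) → ∃ m, z = t * m

/-- `s ≤_L t`, i.e. `Ms ⊆ Mt` -/
def leL (s t : Fo X) : Prop := ∀ z : Fo X, (∃ m, z = m * s) → ∃ m, z = m * t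

/-- `s ≤_J t`, i.e. `MsM ⊆ MtM` -/
def leJ (s t : Fo X) : Prop :=
  ∀ z : Fo X, (∃ m m', z = m * s * m') → ∃ m m', z = m * t * m'

/-- Green's relation `R` -/
def RRel (s t : Fo X) : Prop := leR s t ∧ leR t s

/-- Green's relation `L` -/
def LRel (s t : Fo X) : Prop := leL s t ∧ leL t s

/-- Green's relation `J` -/
def JRel (s t : Fo X) : Prop := leJ s t ∧ leJ t s

/-- Green's relation `H` -/
def HRel (s t : Fo X) : Prop := RRel s t ∧ LRel s t

/-- Green's relation `D = R ∘ L` -/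
def DRel (s t : Fo X) : Prop := ∃ w, RRel s w ∧ LRel w t

end Green

/-- `u` is a prefix of `v` -/
def WPrefix {X : Type u} (u v : W X) : Prop := u = v ∨ ∃ w, u * w = v

/-- `u` is a suffix of `v` -/
def WSuffix {X : Type u} (u v : W X) : Prop := u = v ∨ ∃ w, w * u = v

/-- the sandwich set `S(e,f)` of two idempotents -/
def sandwichSet {S : Type v} [Mul S] (e f : S) : Set S :=
  {g | g * g = g ∧ f * g = g ∧ g * e = g ∧ e * g * f = e * f}

/-- a regular semigroup -/
def IsRegular (S : Type v) [Mul S] : Prop :=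
  ∀ s : S, ∃ t : S, s * t * s = s ∧ t * s * t = t

/-- a subsemigroup which is a regular semigroup on its own -/
def RegularIn {S : Type v} [Semigroup S] (T : Subsemigroup S) : Prop :=
  ∀ t ∈ T, ∃ t' ∈ T, t * t' * t = t ∧ t' * t * t' = t'

/-- `S` is weakly generated by `Y`: no proper regular subsemigroup contains `Y` -/
def WeaklyGen {S : Type v} [Semigroup S] (Y : Set S) : Prop :=
  ∀ T : Subsemigroup S, RegularIn T → Y ⊆ ↑T → T = ⊤

section Skeleton

variable {X : Type u} {S : Type v} [Semigroup S]

open Classical in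
/-- the value of `φ : 𝒢 → S¹` at an element `g` of `𝒢'` -/
noncomputable def appG (φ : Letter X → WithOne S) (g : G5 X) : WithOne S :=
  if h : g.IsTup then φ (Sum.inr ⟨g, h⟩) else φ (Sum.inl Anchor.one)

/-- the value of `φ : 𝒢 → S¹` at an anchor -/
def appA (φ : Letter X → WithOne S) (a : Anchor X) : WithOne S := φ (Sum.inl a)

/-- `g^{φ,l} = (g^cφ)((g^{la})'φ)(g^lφ)(g^{la}φ)` -/
noncomputable def phiL (φ : Letter X → WithOne S) (g : G5 X) : WithOne S :=
  appG φ g.ct * appA φ g.la.inv * appG φ g.lt * appA φ g.la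

/-- `g^{φ,r} = ((g^{ra})'φ)(g^rφ)(g^{ra}φ)(g^cφ)` -/
noncomputable def phiR (φ : Letter X → WithOne S) (g : G5 X) : WithOne S :=
  appA φ g.ra.inv * appG φ g.rt * appA φ g.ra * appG φ g.ct

/-- `φ : 𝒢 → S¹` is a skeleton mapping (condition (iii) uses the sandwich set of
two not-necessarily-idempotent elements: `S(a,b) = S(a*a, bb*)` for inverses `a*`, `b*`) -/
def IsSkeleton (φ : Letter X → WithOne S) : Prop :=
  (∀ x : X,
    (∃ s : S, appA φ (.pos x) = (s : WithOne S)) ∧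
    (∃ s : S, appA φ (.neg x) = (s : WithOne S)) ∧
    appA φ (.pos x) * appA φ (.neg x) * appA φ (.pos x) = appA φ (.pos x) ∧
    appA φ (.neg x) * appA φ (.pos x) * appA φ (.neg x) = appA φ (.neg x) ∧
    appG φ (G5.base x) = appA φ (.pos x) * appA φ (.neg x)) ∧
  (∀ a : Anchor X,
    appA φ .one * appA φ a = appA φ a ∧ appA φ a * appA φ .one = appA φ a) ∧
  (∀ (g : G5 X) (i : ℕ), G5.Mem g i → 2 ≤ i →
    ∃ r' l' : WithOne S,
      phiR φ g * r' * phiR φ g = phiR φ g ∧ r' * phiR φ g * r' = r' ∧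
      phiL φ g * l' * phiL φ g = phiL φ g ∧ l' * phiL φ g * l' = l' ∧
      appG φ g ∈ sandwichSet (r' * phiR φ g) (phiL φ g * l'))

end Skeleton


section GroundAux

variable {X : Type u}

lemma mem_ground_self : ∀ g : G5 X, g ∈ ground g
  | .one => by simp [ground]
  | .base x => by simp [ground]
  | .node l a c b r => by simp [ground]

lemma ground_mono : ∀ {g h : G5 X}, h ∈ ground g → ground h ⊆ ground g := by
  intro g
  induction g with
  | one =>
    intro h hh
    simp [ground] at hh
    subst hh; exact subset_rfl
  | base x =>
    intro h hh
    simp [ground] at hh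
    rcases hh with rfl | rfl
    · intro k hk; simp [ground] at hk ⊢; tauto
    · exact subset_rfl
  | node l a c b r ihl ihc ihr =>
    intro h hh
    simp only [ground, Set.mem_union, Set.mem_singleton_iff] at hh
    rcases hh with (hh | rfl) | hh
    · exact (ihl hh).trans (by intro k hk; simp [ground]; tauto)
    · exact subset_rfl
    · exact (ihr hh).trans (by intro k hk; simp [ground]; tauto)

lemma htE {g : G5 X} {i : ℕ} (h : G5.MemE g i) : g.ht = i := by
  induction h with
  | base x => rfl
  | stepL h ih => simp [G5.ht, ih]
  | stepR h ih => simp [G5.ht, ih]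

lemma ht_of_mem : ∀ (i : ℕ) (g : G5 X), G5.Mem g i → g.ht = i := by
  intro i
  induction i using Nat.strong_induction_on with
  | _ i ih =>
    intro g hm
    cases hm with
    | one => rfl
    | ofE h => exact htE h
    | ofD h =>
      cases h with
      | mk hl hc hr hne hla hrb =>
        have := ih _ (by omega) _ hl
        simp [G5.ht, this]

lemma node_inv {l c r : G5 X} {a b : Anchor X} {i : ℕ}
    (hm : G5.Mem (G5.node l a c b r) i) :
    ∃ j, G5.Mem l j ∧ G5.Mem r j ∧ i = j + 1 := by
  cases hm with
  | ofE h =>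
    cases h with
    | stepL h' => exact ⟨_, .ofE h', .ofE h', rfl⟩
    | stepR h' => exact ⟨_, .ofE h', .ofE h', rfl⟩
  | ofD h =>
    cases h with
    | mk hl hc hr hne hla hrb => exact ⟨_, hl, hr, rfl⟩

lemma endAt_nil (g : G5 X) : endAt g [] = g := rfl

lemma endAt_cons (g : G5 X) (p : Anchor X × G5 X) (l : List (Anchor X × G5 X)) :
    endAt g (p :: l) = endAt p.2 l := by
  unfold endAt
  rw [List.map_cons, List.getLastD_cons]

lemma endAt_concat (g k : G5 X) (a : Anchor X) (l : List (Anchor X × G5 X)) :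
    endAt g (l ++ [(a, k)]) = k := by
  induction l generalizing g with
  | nil => rfl
  | cons p rest ih =>
    rw [List.cons_append, endAt_cons]
    exact ih p.2

lemma chainAnch_concat : ∀ (h : G5 X) (l : List (Anchor X × G5 X)) (a : Anchor X) (g : G5 X),
    ChainAnch h l → Anch (endAt h l) a g → ChainAnch h (l ++ [(a, g)]) := by
  intro h l
  induction l generalizing h with
  | nil => intro a g _ hA; exact ⟨hA, trivial⟩
  | cons p rest ih =>
    intro a g hc hA
    obtain ⟨pa, pg⟩ := p
    rw [endAt_cons] at hA
    exact ⟨hc.1, ih pg a g hc.2 hA⟩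

lemma chainUp_concat : ∀ (h : G5 X) (l : List (Anchor X × G5 X)) (a : Anchor X) (g : G5 X),
    ChainUp h l → g.ht = (endAt h l).ht + 1 → ChainUp h (l ++ [(a, g)]) := by
  intro h l
  induction l generalizing h with
  | nil => intro a g _ hA; exact ⟨hA, trivial⟩
  | cons p rest ih =>
    intro a g hc hA
    obtain ⟨pa, pg⟩ := p
    rw [endAt_cons] at hA
    exact ⟨hc.1, ih pg a g hc.2 hA⟩

lemma chainUp_ht : ∀ (h : G5 X) (l : List (Anchor X × G5 X)),
    ChainUp h l → (endAt h l).ht = h.ht + l.length := by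
  intro h l
  induction l generalizing h with
  | nil => intro _; rfl
  | cons p rest ih =>
    intro hc
    obtain ⟨pa, pg⟩ := p
    rw [endAt_cons]
    have h1 := ih pg hc.2
    have h2 : pg.ht = h.ht + 1 := hc.1
    simp at h1 ⊢
    omega

lemma build : ∀ (g : G5 X), g.InG' → ∀ h, h ∈ ground g → h = g ∨
    ∃ L : Landscape X, L.IsUphill ∧ L.head = h ∧ L.last = g ∧
      ∀ k ∈ L.letters, k ∈ ground g := by
  intro g
  induction g with
  | one =>
    intro _ h hh
    left
    simpa [ground] using hh
  | base x =>
    intro _ h hh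
    simp [ground] at hh
    rcases hh with rfl | rfl
    · right
      refine ⟨⟨G5.one, [(Anchor.one, G5.base x)]⟩, ⟨⟨?_, ?_⟩, ?_⟩, rfl, ?_, ?_⟩
      · intro k hk
        simp [Landscape.letters] at hk
        rcases hk with rfl | rfl
        · exact ⟨0, .one⟩
        · exact ⟨1, .ofE (.base x)⟩
      · exact ⟨Or.inl (Or.inl ⟨rfl, rfl⟩), trivial⟩
      · exact ⟨rfl, trivial⟩
      · rfl
      · intro k hk
        simp [Landscape.letters] at hk
        rcases hk with rfl | rfl <;> simp [ground]
    · left; rfl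
  | node l a c b r ihl ihc ihr =>
    intro hg h hh
    obtain ⟨i, hm⟩ := hg
    obtain ⟨j, hml, hmr, rfl⟩ := node_inv hm
    have htl : l.ht = j := ht_of_mem j l hml
    have htr : r.ht = j := ht_of_mem j r hmr
    simp only [ground, Set.mem_union, Set.mem_singleton_iff] at hh
    rcases hh with (hh | rfl) | hh
    · right
      rcases ihl ⟨j, hml⟩ h hh with rfl | ⟨L, ⟨⟨hlet, hch⟩, hcu⟩, hhead, hlast, hgr⟩
      · -- h = l : one-step uphill
        refine ⟨⟨h, [(a, G5.node h a c b r)]⟩, ⟨⟨?_, ?_⟩, ?_⟩, rfl, ?_, ?_⟩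
        · intro k hk
          simp [Landscape.letters] at hk
          rcases hk with rfl | rfl
          · exact ⟨j, hml⟩
          · exact ⟨j + 1, hm⟩
        · exact ⟨Or.inl (Or.inl ⟨rfl, rfl⟩), trivial⟩
        · exact ⟨rfl, trivial⟩
        · rfl
        · intro k hk
          simp [Landscape.letters] at hk
          rcases hk with rfl | rfl
          · simp only [ground, Set.mem_union]
            exact Or.inl (Or.inl (mem_ground_self k))
          · simp [ground]
      · -- extend L by one step
        obtain ⟨Lh, Lt⟩ := L
        simp only [Landscape.last] at hlast
        refine ⟨⟨Lh, Lt ++ [(a, G5.node l a c b r)]⟩, ⟨⟨?_, ?_⟩, ?_⟩, hhead, ?_, ?_⟩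
        · intro k hk
          simp [Landscape.letters] at hk
          rcases hk with rfl | ⟨a', hk⟩ | rfl
          · exact hlet k (by simp [Landscape.letters])
          · exact hlet k (by simp [Landscape.letters]; exact Or.inr ⟨a', hk⟩)
          · exact ⟨j + 1, hm⟩
        · exact chainAnch_concat Lh Lt a _ hch
            (by rw [hlast]; exact Or.inl (Or.inl ⟨rfl, rfl⟩))
        · exact chainUp_concat Lh Lt a _ hcu (by rw [hlast]; simp [G5.ht])
        · simp [Landscape.last, endAt_concat]
        · intro k hk
          simp [Landscape.letters] at hk
          rcases hk with rfl | ⟨a', hk⟩ | rfl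
          · have := hgr k (by simp [Landscape.letters])
            simp only [ground, Set.mem_union]
            exact Or.inl (Or.inl this)
          · have := hgr k (by simp [Landscape.letters]; exact Or.inr ⟨a', hk⟩)
            simp only [ground, Set.mem_union]
            exact Or.inl (Or.inl this)
          · simp [ground]
    · left; rfl
    · right
      rcases ihr ⟨j, hmr⟩ h hh with rfl | ⟨L, ⟨⟨hlet, hch⟩, hcu⟩, hhead, hlast, hgr⟩
      · refine ⟨⟨h, [(b, G5.node l a c b h)]⟩, ⟨⟨?_, ?_⟩, ?_⟩, rfl, ?_, ?_⟩
        · intro k hk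
          simp [Landscape.letters] at hk
          rcases hk with rfl | rfl
          · exact ⟨j, hmr⟩
          · exact ⟨j + 1, hm⟩
        · exact ⟨Or.inl (Or.inr ⟨rfl, rfl⟩), trivial⟩
        · exact ⟨by simp [G5.ht, htl, htr], trivial⟩
        · rfl
        · intro k hk
          simp [Landscape.letters] at hk
          rcases hk with rfl | rfl
          · simp only [ground, Set.mem_union]
            exact Or.inr (mem_ground_self k)
          · simp [ground]
      · obtain ⟨Lh, Lt⟩ := L
        simp only [Landscape.last] at hlast
        refine ⟨⟨Lh, Lt ++ [(b, G5.node l a c b r)]⟩, ⟨⟨?_, ?_⟩, ?_⟩, hhead, ?_, ?_⟩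
        · intro k hk
          simp [Landscape.letters] at hk
          rcases hk with rfl | ⟨a', hk⟩ | rfl
          · exact hlet k (by simp [Landscape.letters])
          · exact hlet k (by simp [Landscape.letters]; exact Or.inr ⟨a', hk⟩)
          · exact ⟨j + 1, hm⟩
        · exact chainAnch_concat Lh Lt b _ hch
            (by rw [hlast]; exact Or.inl (Or.inr ⟨rfl, rfl⟩))
        · exact chainUp_concat Lh Lt b _ hcu
            (by rw [hlast]; simp [G5.ht, htl, htr])
        · simp [Landscape.last, endAt_concat]
        · intro k hk
          simp [Landscape.letters] at hk
          rcases hk with rfl | ⟨a', hk⟩ | rfl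
          · have := hgr k (by simp [Landscape.letters])
            simp only [ground, Set.mem_union]
            exact Or.inr this
          · have := hgr k (by simp [Landscape.letters]; exact Or.inr ⟨a', hk⟩)
            simp only [ground, Set.mem_union]
            exact Or.inr this
          · simp [ground]

end GroundAux

/-- Properties of the ground `ε(g)`. -/
theorem statement13 (X : Type u) [Nonempty X] (g h : G5 X)
    (hg : g.InG') (hh : h.InG') :
    (h ∈ ground g ↔ ground h ⊆ ground g) ∧
    (h ∈ ground g → h ≠ g →
      ∃ L : Landscape X, L.IsUphill ∧ L.tail.length = g.ht - h.ht ∧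
        L.head = h ∧ L.last = g ∧ ∀ k ∈ L.letters, k ∈ ground g) := by
  constructor
  · constructor
    · exact ground_mono
    · intro hs; exact hs (mem_ground_self h)
  · intro hmem hne
    rcases build g hg h hmem with rfl | ⟨L, hup, hhead, hlast, hgr⟩
    · exact absurd rfl hne
    · refine ⟨L, hup, ?_, hhead, hlast, hgr⟩
      have := chainUp_ht L.head L.tail hup.2
      rw [show endAt L.head L.tail = L.last from rfl, hlast, hhead] at this
      omega

end Paper
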